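/- If (A_n) is a Markov sequence of events of order k with P(A_n) → 0, then P(limsup A_n) = 0 if ∑_{n=1}^∞ P(A_n^c ∩ ... ∩ A_{n+k-1}^c ∩ A_{n+k}) < ∞, and P(limsup A_n) = 1 if this series diverges. -/

import Mathlib

/-!
Convergent case: a point lying in infinitely many `A n` either lies in infinitely many of the
events `Aₙᶜ ∩ ⋯ ∩ Aₙ₊ₖ₋₁ᶜ ∩ Aₙ₊ₖ` (a null set by Borel–Cantelli), or from some time on every window
`Aₘ ∪ ⋯ ∪ Aₘ₊ₖ` contains it (a null set because `P(Aₙ) → 0`).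

Divergent case: a point outside `limsup A` determines the finite set `s` of indices `n` with
`ω ∈ Aₙ`, so it suffices that each of the countably many events `{ω | {n | ω ∈ Aₙ} = s}` is null.
Past `max s`, the Markov property lets us condition on the whole past: once the last `k` events
failed, the next one fails with probability `1 - P(Aₙᶜ ∩ ⋯ ∩ Aₙ₊ₖ)`, so such an event has
probability at most `∏ (1 - pₙ) ≤ (1 + ∑ pₙ)⁻¹ → 0`.
-/

open MeasureTheory Filter

/-- `A` is a Markov sequence of events of order `k`: the indicators `1_{A n}` form a
Markov chain of order `k`.  Elementary formulation: conditionally on any cylinder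
event determined by `A 0, …, A n` (each taken either as itself or its complement),
the conditional probability of `A (n+1)` depends only on the last `k` coordinates. -/
def IsMarkovSeqOrder {Ω : Type*} [MeasurableSpace Ω] (μ : Measure Ω) (k : ℕ)
    (A : ℕ → Set Ω) : Prop :=
  ∀ n : ℕ, k ≤ n → ∀ B : ℕ → Set Ω, (∀ i, i ≤ n → B i = A i ∨ B i = (A i)ᶜ) →
    μ (⋂ i ∈ Finset.range (n + 1), B i) ≠ 0 →
    μ (A (n + 1) ∩ ⋂ i ∈ Finset.range (n + 1), B i) * μ (⋂ i ∈ Finset.Icc (n + 1 - k) n, B i)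
      = μ (A (n + 1) ∩ ⋂ i ∈ Finset.Icc (n + 1 - k) n, B i)
        * μ (⋂ i ∈ Finset.range (n + 1), B i)

open scoped ENNReal Topology

def gapThenHit {α : Type*} (A : ℕ → Set α) (k n : ℕ) : Set α :=
  (⋂ i ∈ Finset.range k, (A (n + i))ᶜ) ∩ A (n + k)

def eventOrCompl {α : Type*} (A : ℕ → Set α) (s : Finset ℕ) (i : ℕ) : Set α :=
  if i ∈ s then A i else (A i)ᶜ

lemma eventOrCompl_eq_or {α : Type*} (A : ℕ → Set α) (s : Finset ℕ) (i : ℕ) :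
    eventOrCompl A s i = A i ∨ eventOrCompl A s i = (A i)ᶜ := by
  unfold eventOrCompl
  split_ifs <;> simp

lemma eventOrCompl_of_notMem {α : Type*} (A : ℕ → Set α) {s : Finset ℕ} {i : ℕ} (hi : i ∉ s) :
    eventOrCompl A s i = (A i)ᶜ :=
  if_neg hi

namespace ENNReal

lemma one_sub_le_inv_one_add {p : ℝ≥0∞} (hp : p ≤ 1) : 1 - p ≤ (1 + p)⁻¹ := by
  rw [ENNReal.le_inv_iff_mul_le]
  calc (1 - p) * (1 + p) = (1 - p) + (1 - p) * p := by rw [mul_add, mul_one]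
    _ ≤ (1 - p) + 1 * p := by gcongr; exact tsub_le_self
    _ = 1 := by rw [one_mul, tsub_add_cancel_of_le hp]

lemma prod_one_sub_le_inv_one_add_sum (p : ℕ → ℝ≥0∞) (hp : ∀ j, p j ≤ 1) (t : ℕ) :
    ∏ j ∈ Finset.range t, (1 - p j) ≤ (1 + ∑ j ∈ Finset.range t, p j)⁻¹ := by
  induction t with
  | zero => simp
  | succ t ih =>
    set S := ∑ j ∈ Finset.range t, p j
    rw [Finset.prod_range_succ, Finset.sum_range_succ]
    calc (∏ j ∈ Finset.range t, (1 - p j)) * (1 - p t)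
        ≤ (1 + S)⁻¹ * (1 + p t)⁻¹ := mul_le_mul' ih (one_sub_le_inv_one_add (hp t))
      _ = ((1 + S) * (1 + p t))⁻¹ := by
          rw [ENNReal.mul_inv (Or.inl (by simp)) (Or.inr (by simp))]
      _ ≤ (1 + (S + p t))⁻¹ := by
          rw [ENNReal.inv_le_inv]
          calc 1 + (S + p t) ≤ 1 + (S + p t) + S * p t := le_self_add
            _ = (1 + S) * (1 + p t) := by ring

lemma tendsto_prod_one_sub_of_tsum_eq_top {p : ℕ → ℝ≥0∞} (hp : ∀ j, p j ≤ 1)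
    (h : ∑' j, p j = ∞) :
    Tendsto (fun t => ∏ j ∈ Finset.range t, (1 - p j)) atTop (𝓝 0) := by
  have hsum : Tendsto (fun t => 1 + ∑ j ∈ Finset.range t, p j) atTop (𝓝 ∞) := by
    simpa [h] using tendsto_const_nhds.add (ENNReal.tendsto_nat_tsum p)
  have hinv : Tendsto (fun t => (1 + ∑ j ∈ Finset.range t, p j)⁻¹) atTop (𝓝 0) := by
    simpa using tendsto_inv_iff.2 hsum
  exact tendsto_of_tendsto_of_tendsto_of_le_of_le tendsto_const_nhds hinv (fun _ => zero_le)
    (prod_one_sub_le_inv_one_add_sum p hp)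

lemma tsum_nat_add_eq_top {f : ℕ → ℝ≥0∞} (hf : ∀ i, f i ≠ ∞) (h : ∑' i, f i = ∞) (N : ℕ) :
    ∑' i, f (i + N) = ∞ := by
  have hsplit := ENNReal.summable.sum_add_tsum_nat_add' (f := f) (k := N)
  rw [h, ENNReal.add_eq_top] at hsplit
  exact hsplit.resolve_left (ENNReal.sum_ne_top.2 fun i _ => hf i)

end ENNReal

section Measure

variable {Ω : Type*} [MeasurableSpace Ω] {μ : Measure Ω}

lemma measure_liminf_atTop_eq_zero_of_tendsto {s : ℕ → Set Ω}
    (h : Tendsto (fun n => μ (s n)) atTop (𝓝 0)) : μ (liminf s atTop) = 0 := by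
  rw [liminf_eq_iSup_iInf_of_nat]
  refine measure_iUnion_null fun N => le_antisymm ?_ zero_le
  exact ge_of_tendsto h ((eventually_ge_atTop N).mono fun n hn => measure_mono (iInf₂_le n hn))

lemma tendsto_measure_biUnion_range_add {A : ℕ → Set Ω}
    (h : Tendsto (fun n => μ (A n)) atTop (𝓝 0)) (r : ℕ) :
    Tendsto (fun m => μ (⋃ i ∈ Finset.range r, A (m + i))) atTop (𝓝 0) := by
  have hsum : Tendsto (fun m => ∑ i ∈ Finset.range r, μ (A (m + i))) atTop (𝓝 0) := by
    simpa using tendsto_finsetSum (Finset.range r) fun i _ => h.comp (tendsto_add_atTop_nat i)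
  exact tendsto_of_tendsto_of_tendsto_of_le_of_le tendsto_const_nhds hsum (fun _ => zero_le)
    fun m => measure_biUnion_finset_le _ _

/-- Elementary form of `P(Eᶜ | C) ≤ 1 - P(E ∩ S)` given `P(E | C) = P(E | S)`. -/
lemma measure_compl_inter_le_of_mul_eq [IsProbabilityMeasure μ] {E C S : Set Ω}
    (hE : MeasurableSet E) (h : μ (E ∩ C) * μ S = μ (E ∩ S) * μ C) :
    μ (Eᶜ ∩ C) ≤ (1 - μ (E ∩ S)) * μ C := by
  have hsplit : μ (C ∩ E) + μ (Eᶜ ∩ C) = μ C := by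
    rw [Set.inter_comm Eᶜ, ← Set.sdiff_eq]
    exact measure_inter_add_sdiff C hE
  calc μ (Eᶜ ∩ C) = μ C - μ (E ∩ C) := by
        rw [← hsplit, Set.inter_comm C, ENNReal.add_sub_cancel_left (measure_ne_top μ _)]
    _ ≤ μ C - μ (E ∩ S) * μ C := by
        refine tsub_le_tsub_left ?_ _
        calc μ (E ∩ S) * μ C = μ (E ∩ C) * μ S := h.symm
          _ ≤ μ (E ∩ C) * 1 := by gcongr; exact prob_le_one
          _ = μ (E ∩ C) := mul_one _
    _ = (1 - μ (E ∩ S)) * μ C := by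
        rw [ENNReal.sub_mul fun _ _ => measure_ne_top μ _, one_mul]

end Measure

section Markov

variable {Ω : Type*} [MeasurableSpace Ω] {μ : Measure Ω} {k : ℕ} {A : ℕ → Set Ω}

lemma IsMarkovSeqOrder.measure_inter_mul_eq (hM : IsMarkovSeqOrder μ k A) {n : ℕ} (hn : k ≤ n)
    {B : ℕ → Set Ω} (hB : ∀ i, i ≤ n → B i = A i ∨ B i = (A i)ᶜ) :
    μ (A (n + 1) ∩ ⋂ i ∈ Finset.range (n + 1), B i) * μ (⋂ i ∈ Finset.Icc (n + 1 - k) n, B i)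
      = μ (A (n + 1) ∩ ⋂ i ∈ Finset.Icc (n + 1 - k) n, B i)
        * μ (⋂ i ∈ Finset.range (n + 1), B i) := by
  by_cases hC : μ (⋂ i ∈ Finset.range (n + 1), B i) = 0
  · rw [hC, measure_mono_null Set.inter_subset_right hC, zero_mul, mul_zero]
  · exact hM n hn B hB hC

lemma IsMarkovSeqOrder.measure_cylinder_succ_le [IsProbabilityMeasure μ]
    (hmeas : ∀ n, MeasurableSet (A n)) (hM : IsMarkovSeqOrder μ k A) {s : Finset ℕ} {n : ℕ}
    (hn : k ≤ n) (hs : ∀ i ∈ s, i < n + 1 - k) :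
    μ (⋂ i ∈ Finset.range (n + 2), eventOrCompl A s i)
      ≤ (1 - μ (gapThenHit A k (n + 1 - k)))
        * μ (⋂ i ∈ Finset.range (n + 1), eventOrCompl A s i) := by
  have hgap : ∀ i, n + 1 - k ≤ i → eventOrCompl A s i = (A i)ᶜ :=
    fun i hi => eventOrCompl_of_notMem A fun his => (hs i his).not_ge hi
  have hhit : gapThenHit A k (n + 1 - k)
      = A (n + 1) ∩ ⋂ i ∈ Finset.Icc (n + 1 - k) n, eventOrCompl A s i := by
    ext x
    simp only [gapThenHit, Set.mem_inter_iff, Set.mem_iInter, Finset.mem_range, Finset.mem_Icc]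
    rw [show n + 1 - k + k = n + 1 by omega, and_comm]
    refine and_congr_right fun _ => ⟨fun h i hi => ?_, fun h j hj => ?_⟩
    · rw [hgap i hi.1, show i = n + 1 - k + (i - (n + 1 - k)) by omega]
      exact h _ (by omega)
    · simpa [hgap _ le_self_add] using h (n + 1 - k + j) ⟨le_self_add, by omega⟩
  rw [Finset.range_add_one, Finset.set_biInter_insert, hgap _ (by omega), hhit]
  exact measure_compl_inter_le_of_mul_eq (hmeas _)
    (hM.measure_inter_mul_eq hn fun i _ => eventOrCompl_eq_or A s i)

lemma IsMarkovSeqOrder.measure_cylinder_le_prod [IsProbabilityMeasure μ]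
    (hmeas : ∀ n, MeasurableSet (A n)) (hM : IsMarkovSeqOrder μ k A) {s : Finset ℕ} {m : ℕ}
    (hs : ∀ i ∈ s, i ≤ m) (t : ℕ) :
    μ (⋂ i ∈ Finset.range (m + k + t + 1), eventOrCompl A s i)
      ≤ ∏ j ∈ Finset.range t, (1 - μ (gapThenHit A k (j + (m + 1)))) := by
  induction t with
  | zero => simpa using prob_le_one
  | succ t ih =>
    have hstep := hM.measure_cylinder_succ_le hmeas (n := m + k + t) (s := s) (by omega)
      fun i hi => by have := hs i hi; omega
    rw [show m + k + t + 1 - k = t + (m + 1) by omega] at hstep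
    rw [Finset.prod_range_succ, mul_comm]
    exact hstep.trans (by gcongr)

lemma IsMarkovSeqOrder.measure_iInter_eventOrCompl_eq_zero [IsProbabilityMeasure μ]
    (hmeas : ∀ n, MeasurableSet (A n)) (hM : IsMarkovSeqOrder μ k A)
    (hdiv : ∑' n, μ (gapThenHit A k n) = ∞) (s : Finset ℕ) :
    μ (⋂ i, eventOrCompl A s i) = 0 := by
  set m := s.sup id
  have hs : ∀ i ∈ s, i ≤ m := fun i hi => Finset.le_sup (f := id) hi
  have htail : ∑' j, μ (gapThenHit A k (j + (m + 1))) = ∞ :=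
    ENNReal.tsum_nat_add_eq_top (fun _ => measure_ne_top μ _) hdiv _
  refine le_antisymm (ge_of_tendsto
    (ENNReal.tendsto_prod_one_sub_of_tsum_eq_top (fun _ => prob_le_one) htail)
    (Eventually.of_forall fun t => ?_)) zero_le
  exact (measure_mono (Set.iInter_subset_iInter₂ _ _)).trans (hM.measure_cylinder_le_prod hmeas hs t)

end Markov

lemma limsup_subset_limsup_gapThenHit_union {α : Type*} (A : ℕ → Set α) (k : ℕ) :
    limsup A atTop ⊆ limsup (gapThenHit A k) atTop ∪
      liminf (fun m => ⋃ i ∈ Finset.range (k + 1), A (m + i)) atTop := by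
  classical
  intro x hx
  rw [mem_limsup_iff_frequently_mem, frequently_atTop] at hx
  simp only [Set.mem_union, mem_limsup_iff_frequently_mem, mem_liminf_iff_eventually_mem]
  refine or_iff_not_imp_right.2 fun hwindow => frequently_atTop.2 fun a => ?_
  obtain ⟨m, ham, hm⟩ := frequently_atTop.1 (not_eventually.1 hwindow) a
  simp only [Set.mem_iUnion, Finset.mem_range, not_exists] at hm
  have hhit : ∃ j, x ∈ A (m + j) := by
    obtain ⟨j, hmj, hxj⟩ := hx m
    exact ⟨j - m, by rwa [Nat.add_sub_cancel' hmj]⟩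
  set j := Nat.find hhit
  have hkj : k < j := not_le.1 fun h => hm _ (by omega) (Nat.find_spec hhit)
  refine ⟨m + j - k, by omega, ?_⟩
  simp only [gapThenHit, Set.mem_inter_iff, Set.mem_iInter, Finset.mem_range, Set.mem_compl_iff]
  refine ⟨fun i hi hxi => Nat.find_min hhit (m := j - k + i) (by omega) ?_, ?_⟩
  · rwa [show m + (j - k + i) = m + j - k + i by omega]
  · rw [show m + j - k + k = m + j by omega]
    exact Nat.find_spec hhit

lemma compl_limsup_subset_iUnion_iInter_eventOrCompl {α : Type*} (A : ℕ → Set α) :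
    (limsup A atTop)ᶜ ⊆ ⋃ s : Finset ℕ, ⋂ i, eventOrCompl A s i := by
  intro x hx
  rw [Set.mem_compl_iff, mem_limsup_iff_frequently_mem, Nat.frequently_atTop_iff_infinite,
    Set.not_infinite] at hx
  refine Set.mem_iUnion.2 ⟨hx.toFinset, Set.mem_iInter.2 fun i => ?_⟩
  by_cases h : x ∈ A i <;> simp [eventOrCompl, h]

theorem stmt6 {Ω : Type*} [MeasurableSpace Ω] (μ : Measure Ω) [IsProbabilityMeasure μ]
    (k : ℕ) (A : ℕ → Set Ω) (hmeas : ∀ n, MeasurableSet (A n))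
    (hMarkov : IsMarkovSeqOrder μ k A)
    (h0 : Tendsto (fun n => μ (A n)) atTop (nhds 0)) :
    (∑' n : ℕ, μ ((⋂ i ∈ Finset.range k, (A (n + i))ᶜ) ∩ A (n + k)) ≠ ⊤ →
      μ (limsup A atTop) = 0) ∧
    (∑' n : ℕ, μ ((⋂ i ∈ Finset.range k, (A (n + i))ᶜ) ∩ A (n + k)) = ⊤ →
      μ (limsup A atTop) = 1) := by
  refine ⟨fun hconv => ?_, fun hdiv => ?_⟩
  · refine measure_mono_null (limsup_subset_limsup_gapThenHit_union A k) (measure_union_null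
      (measure_limsup_atTop_eq_zero (s := gapThenHit A k) hconv) ?_)
    exact measure_liminf_atTop_eq_zero_of_tendsto (tendsto_measure_biUnion_range_add h0 _)
  · rw [← prob_compl_eq_zero_iff (MeasurableSet.measurableSet_limsup hmeas)]
    exact measure_mono_null (compl_limsup_subset_iUnion_iInter_eventOrCompl A)
      (measure_iUnion_null (hMarkov.measure_iInter_eventOrCompl_eq_zero hmeas hdiv))
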